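/- arXiv:1910.07675 — 7 statements merged into one kernel-verified Lean document; each statement's English description precedes it below -/
import Mathlib

section
/- Let μ be a finite measure on a measurable space Ω and let f : Ω → ℝ be measurable with f(ω) > 0 μ-almost everywhere. Suppose there exists ε > 0 such that ∫ (f(ω)^ε + f(ω)^{−ε}) dμ(ω) < ∞. Then the moment function M(k) = ∫ f(ω)^k dμ(ω) is infinitely differentiable on the open interval (−ε, ε), and for every natural number n and every k ∈ (−ε, ε), the n-th iterated derivative of M at k equals ∫ (log f(ω))^n · f(ω)^k dμ(ω); in particular the n-th derivative of M at 0 equals ∫ (log f(ω))^n dμ(ω). -/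
open MeasureTheory
lemma rpow_le_add_rpow_of_abs_le {x : ℝ} (hx : 0 < x) {ε a : ℝ} (ha : |a| ≤ ε) :
    x ^ a ≤ x ^ ε + x ^ (-ε) := by
  rcases le_total 1 x with h1 | h1
  · have h := Real.rpow_le_rpow_of_exponent_le h1 (le_of_abs_le ha)
    have h2 : 0 ≤ x ^ (-ε) := Real.rpow_nonneg hx.le _
    linarith
  · have h := Real.rpow_le_rpow_of_exponent_ge hx h1 (neg_le_of_abs_le ha)
    have h2 : 0 ≤ x ^ ε := Real.rpow_nonneg hx.le _
    linarith

lemma abs_log_le_rpow_div {δ : ℝ} (hδ : 0 < δ) {x : ℝ} (hx : 0 < x) :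
    |Real.log x| ≤ (x ^ δ + x ^ (-δ)) / δ := by
  have hnn : 0 ≤ x ^ δ := Real.rpow_nonneg hx.le _
  have hnn' : 0 ≤ x ^ (-δ) := Real.rpow_nonneg hx.le _
  rcases le_total 1 x with h1 | h1
  · rw [abs_of_nonneg (Real.log_nonneg h1)]
    have h := Real.log_le_rpow_div hx.le hδ
    have h2 : x ^ δ / δ ≤ (x ^ δ + x ^ (-δ)) / δ := by gcongr; linarith
    linarith
  · rw [abs_of_nonpos (Real.log_nonpos hx.le h1)]
    have h := Real.log_le_rpow_div (x := x⁻¹) (by positivity) hδ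
    rw [Real.log_inv, Real.inv_rpow hx.le, ← Real.rpow_neg hx.le] at h
    have h2 : x ^ (-δ) / δ ≤ (x ^ δ + x ^ (-δ)) / δ := by gcongr; linarith
    linarith

lemma add_pow_le_two_pow_mul (a b : ℝ) (ha : 0 ≤ a) (hb : 0 ≤ b) (m : ℕ) :
    (a + b) ^ m ≤ 2 ^ m * (a ^ m + b ^ m) := by
  have h1 : a + b ≤ 2 * max a b := by
    rcases le_total a b with h | h
    · rw [max_eq_right h]; linarith
    · rw [max_eq_left h]; linarith
  have h2 : (a + b) ^ m ≤ (2 * max a b) ^ m :=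
    pow_le_pow_left₀ (by positivity) h1 m
  have h3 : (max a b) ^ m ≤ a ^ m + b ^ m := by
    rcases le_total a b with h | h
    · rw [max_eq_right h]; exact le_add_of_nonneg_left (by positivity)
    · rw [max_eq_left h]; exact le_add_of_nonneg_right (by positivity)
  have hm : (0:ℝ) ≤ (max a b) := le_max_of_le_left ha
  calc (a + b) ^ m ≤ (2 * max a b) ^ m := h2
    _ = 2 ^ m * (max a b) ^ m := by rw [mul_pow]
    _ ≤ 2 ^ m * (a ^ m + b ^ m) := by
        have : (0:ℝ) ≤ 2 ^ m := by positivity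
        exact mul_le_mul_of_nonneg_left h3 this

lemma log_pow_mul_rpow_le {ε : ℝ} (hε : 0 < ε) (m : ℕ) {s : ℝ} (hs0 : 0 ≤ s) (hs : s < ε) :
    ∃ C : ℝ, ∀ x : ℝ, 0 < x → ∀ t : ℝ, |t| ≤ s →
      |Real.log x| ^ m * x ^ t ≤ C * (x ^ ε + x ^ (-ε)) := by
  rcases Nat.eq_zero_or_pos m with rfl | hm
  · refine ⟨1, fun x hx t ht => ?_⟩
    simpa using rpow_le_add_rpow_of_abs_le hx (le_trans ht hs.le)
  · set δ : ℝ := (ε - s) / m with hδdef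
    have hδ : 0 < δ := div_pos (by linarith) (by exact_mod_cast hm)
    have hδm : δ * m = ε - s := by
      rw [hδdef]; field_simp
    refine ⟨2 ^ m / δ ^ m * 2, fun x hx t ht => ?_⟩
    have hxt : 0 ≤ x ^ t := (Real.rpow_pos_of_pos hx t).le
    have ha : (x ^ δ) ^ m = x ^ (δ * m) := by
      rw [← Real.rpow_natCast (x ^ δ) m, ← Real.rpow_mul hx.le]
    have hb : (x ^ (-δ)) ^ m = x ^ (-(δ * m)) := by
      rw [← Real.rpow_natCast (x ^ (-δ)) m, ← Real.rpow_mul hx.le, neg_mul]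
    have key : |Real.log x| ^ m ≤ 2 ^ m / δ ^ m * (x ^ (δ * m) + x ^ (-(δ * m))) := by
      have h1 := abs_log_le_rpow_div hδ hx
      have h2 : |Real.log x| ^ m ≤ ((x ^ δ + x ^ (-δ)) / δ) ^ m :=
        pow_le_pow_left₀ (abs_nonneg _) h1 m
      have h3 := add_pow_le_two_pow_mul (x ^ δ) (x ^ (-δ))
        (Real.rpow_nonneg hx.le _) (Real.rpow_nonneg hx.le _) m
      rw [ha, hb] at h3
      calc |Real.log x| ^ m ≤ ((x ^ δ + x ^ (-δ)) / δ) ^ m := h2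
        _ = (x ^ δ + x ^ (-δ)) ^ m / δ ^ m := by rw [div_pow]
        _ ≤ 2 ^ m * (x ^ (δ * m) + x ^ (-(δ * m))) / δ ^ m := by gcongr
        _ = 2 ^ m / δ ^ m * (x ^ (δ * m) + x ^ (-(δ * m))) := by ring
    have habs1 : |δ * m + t| ≤ ε := by
      rw [hδm]
      have := abs_le.1 ht
      rw [abs_le]; constructor <;> linarith
    have habs2 : |-(δ * m) + t| ≤ ε := by
      rw [hδm]
      have := abs_le.1 ht
      rw [abs_le]; constructor <;> linarith
    calc |Real.log x| ^ m * x ^ t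
        ≤ 2 ^ m / δ ^ m * (x ^ (δ * m) + x ^ (-(δ * m))) * x ^ t :=
          mul_le_mul_of_nonneg_right key hxt
      _ = 2 ^ m / δ ^ m * (x ^ (δ * m + t) + x ^ (-(δ * m) + t)) := by
          rw [mul_assoc, add_mul, ← Real.rpow_add hx, ← Real.rpow_add hx]
      _ ≤ 2 ^ m / δ ^ m * ((x ^ ε + x ^ (-ε)) + (x ^ ε + x ^ (-ε))) := by
          gcongr
          · exact rpow_le_add_rpow_of_abs_le hx habs1
          · exact rpow_le_add_rpow_of_abs_le hx habs2
      _ = 2 ^ m / δ ^ m * 2 * (x ^ ε + x ^ (-ε)) := by ring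


/-- Differentiation under the integral sign for the moment function
`M(k) = ∫ f^k dμ` of an a.e. positive `f` on a finite measure space, assuming
`∫ (f^ε + f^(-ε)) dμ < ∞` for some `ε > 0`: `M` is infinitely differentiable
on `(-ε, ε)` and its `n`-th iterated derivative at `k ∈ (-ε, ε)` is
`∫ (log f)^n * f^k dμ`; in particular at `k = 0` it is `∫ (log f)^n dμ`. -/
theorem moment_function_smooth_iteratedDeriv {Ω : Type*} [MeasurableSpace Ω]
    (μ : Measure Ω) [IsFiniteMeasure μ] (f : Ω → ℝ) (hf : Measurable f)
    (hf0 : ∀ᵐ ω ∂μ, 0 < f ω) (ε : ℝ) (hε : 0 < ε)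
    (hint : Integrable (fun ω => f ω ^ ε + f ω ^ (-ε)) μ) :
    ContDiffOn ℝ (⊤ : ℕ∞) (fun k : ℝ => ∫ ω, f ω ^ k ∂μ) (Set.Ioo (-ε) ε) ∧
      (∀ (n : ℕ), ∀ k ∈ Set.Ioo (-ε) ε,
        iteratedDeriv n (fun k : ℝ => ∫ ω, f ω ^ k ∂μ) k
          = ∫ ω, (Real.log (f ω)) ^ n * f ω ^ k ∂μ) ∧
      (∀ n : ℕ, iteratedDeriv n (fun k : ℝ => ∫ ω, f ω ^ k ∂μ) 0
          = ∫ ω, (Real.log (f ω)) ^ n ∂μ) := by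
  
  -- real-valued auxiliary functions
  set G : ℕ → ℝ → ℝ := fun n k => ∫ ω, (Real.log (f ω)) ^ n * f ω ^ k ∂μ with hGdef
  have hmeasR : ∀ (n : ℕ) (k : ℝ),
      AEStronglyMeasurable (fun ω => (Real.log (f ω)) ^ n * f ω ^ k) μ := by
    intro n k
    have hm : Measurable fun ω =>
        (Real.log (f ω)) ^ n * Real.exp (Real.log (f ω) * k) :=
      ((Real.measurable_log.comp hf).pow_const n).mul
        (Real.measurable_exp.comp ((Real.measurable_log.comp hf).mul_const k))
    refine hm.aestronglyMeasurable.congr ?_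
    filter_upwards [hf0] with ω hω
    rw [Real.rpow_def_of_pos hω]
  have hintR : ∀ (n : ℕ) (k : ℝ), |k| < ε →
      Integrable (fun ω => (Real.log (f ω)) ^ n * f ω ^ k) μ := by
    intro n k hk
    obtain ⟨C, hC⟩ := log_pow_mul_rpow_le hε n (abs_nonneg k) hk
    refine (hint.const_mul C).mono' (hmeasR n k) ?_
    filter_upwards [hf0] with ω hω
    have hxk : 0 < f ω ^ k := Real.rpow_pos_of_pos hω k
    calc ‖Real.log (f ω) ^ n * f ω ^ k‖
        = |Real.log (f ω)| ^ n * f ω ^ k := by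
          rw [norm_mul, norm_pow, Real.norm_eq_abs, Real.norm_eq_abs, abs_of_pos hxk]
      _ ≤ C * (f ω ^ ε + f ω ^ (-ε)) := hC (f ω) hω k le_rfl
  -- derivative of G n is G (n+1) on the interval
  have hderivR : ∀ (n : ℕ), ∀ k ∈ Set.Ioo (-ε) ε,
      HasDerivAt (G n) (G (n + 1) k) k := by
    intro n k hk
    have hk' : |k| < ε := abs_lt.2 ⟨hk.1, hk.2⟩
    set r : ℝ := (ε - |k|) / 2 with hrdef
    have hr0 : 0 < r := by
      have : |k| < ε := hk'
      rw [hrdef]; linarith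
    have hs : |k| + r < ε := by rw [hrdef]; linarith [hk']
    obtain ⟨C, hC⟩ := log_pow_mul_rpow_le hε (n + 1) (by positivity : (0:ℝ) ≤ |k| + r) hs
    have h := hasDerivAt_integral_of_dominated_loc_of_deriv_le
      (F := fun x ω => (Real.log (f ω)) ^ n * f ω ^ x)
      (F' := fun x ω => (Real.log (f ω)) ^ (n + 1) * f ω ^ x)
      (bound := fun ω => C * (f ω ^ ε + f ω ^ (-ε))) (Metric.ball_mem_nhds _ hr0)
      (Filter.Eventually.of_forall fun x => hmeasR n x) (hintR n k hk')
      (hmeasR (n + 1) k) ?_ (hint.const_mul C) ?_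
    · exact h.2
    · filter_upwards [hf0] with ω hω
      intro x hx
      have hxk : 0 < f ω ^ x := Real.rpow_pos_of_pos hω x
      have hxabs : |x| ≤ |k| + r := by
        have := Metric.mem_ball.1 hx
        rw [Real.dist_eq] at this
        calc |x| = |k + (x - k)| := by ring_nf
          _ ≤ |k| + |x - k| := abs_add_le _ _
          _ ≤ |k| + r := by linarith
      calc ‖Real.log (f ω) ^ (n + 1) * f ω ^ x‖
          = |Real.log (f ω)| ^ (n + 1) * f ω ^ x := by
            rw [norm_mul, norm_pow, Real.norm_eq_abs, Real.norm_eq_abs, abs_of_pos hxk]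
        _ ≤ C * (f ω ^ ε + f ω ^ (-ε)) := hC (f ω) hω x hxabs
    · filter_upwards [hf0] with ω hω
      intro x hx
      have h1 : HasDerivAt (fun y : ℝ => f ω ^ y) (f ω ^ x * Real.log (f ω)) x :=
        (Real.hasStrictDerivAt_const_rpow hω x).hasDerivAt
      have h2 := h1.const_mul ((Real.log (f ω)) ^ n)
      refine h2.congr_deriv ?_
      rw [pow_succ]; ring
  have hG0 : (fun k : ℝ => ∫ ω, f ω ^ k ∂μ) = G 0 := by
    funext k; simp [hGdef]
  -- iterated derivative identity on the interval
  have hiter : ∀ n : ℕ, Set.EqOn (iteratedDeriv n (fun k : ℝ => ∫ ω, f ω ^ k ∂μ))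
      (G n) (Set.Ioo (-ε) ε) := by
    intro n
    induction n with
    | zero => intro k hk; simp [iteratedDeriv_zero, hG0]
    | succ n ih =>
      intro k hk
      rw [iteratedDeriv_succ]
      have hev : iteratedDeriv n (fun k : ℝ => ∫ ω, f ω ^ k ∂μ) =ᶠ[nhds k] G n :=
        Filter.eventuallyEq_of_mem (isOpen_Ioo.mem_nhds hk) ih
      rw [hev.deriv_eq]
      exact (hderivR n k hk).deriv
  -- complex analyticity
  set Mc : ℂ → ℂ := fun z => ∫ ω, (f ω : ℂ) ^ z ∂μ with hMcdef
  have hmeasC : ∀ z : ℂ, AEStronglyMeasurable (fun ω => (f ω : ℂ) ^ z) μ := by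
    intro z
    have hm : Measurable fun ω => Complex.exp ((Real.log (f ω) : ℂ) * z) :=
      Complex.measurable_exp.comp
        ((Complex.measurable_ofReal.comp (Real.measurable_log.comp hf)).mul measurable_const)
    refine hm.aestronglyMeasurable.congr ?_
    filter_upwards [hf0] with ω hω
    rw [Complex.cpow_def_of_ne_zero (by exact_mod_cast hω.ne'),
      Complex.ofReal_log hω.le]
  have hmeasC' : ∀ z : ℂ,
      AEStronglyMeasurable (fun ω => Complex.log (f ω) * (f ω : ℂ) ^ z) μ := by
    intro z
    have hm : Measurable fun ω =>
        (Real.log (f ω) : ℂ) * Complex.exp ((Real.log (f ω) : ℂ) * z) :=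
      (Complex.measurable_ofReal.comp (Real.measurable_log.comp hf)).mul
        (Complex.measurable_exp.comp
          ((Complex.measurable_ofReal.comp (Real.measurable_log.comp hf)).mul measurable_const))
    refine hm.aestronglyMeasurable.congr ?_
    filter_upwards [hf0] with ω hω
    rw [Complex.cpow_def_of_ne_zero (by exact_mod_cast hω.ne'),
      Complex.ofReal_log hω.le]
  have hnormC : ∀ᵐ ω ∂μ, ∀ z : ℂ, ‖(f ω : ℂ) ^ z‖ = f ω ^ z.re := by
    filter_upwards [hf0] with ω hω
    intro z
    rw [Complex.norm_cpow_eq_rpow_re_of_pos hω]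
  have hintC : ∀ z : ℂ, |z.re| < ε → Integrable (fun ω => (f ω : ℂ) ^ z) μ := by
    intro z hz
    refine hint.mono' (hmeasC z) ?_
    filter_upwards [hf0] with ω hω
    rw [Complex.norm_cpow_eq_rpow_re_of_pos hω]
    exact rpow_le_add_rpow_of_abs_le hω hz.le
  have hderivC : ∀ z₀ : ℂ, |z₀.re| < ε →
      HasDerivAt Mc (∫ ω, Complex.log (f ω) * (f ω : ℂ) ^ z₀ ∂μ) z₀ := by
    intro z₀ hz₀
    set r : ℝ := (ε - |z₀.re|) / 2 with hrdef
    have hr0 : 0 < r := by rw [hrdef]; linarith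
    have hs : |z₀.re| + r < ε := by rw [hrdef]; linarith
    obtain ⟨C, hC⟩ := log_pow_mul_rpow_le hε 1 (by positivity : (0:ℝ) ≤ |z₀.re| + r) hs
    have h := hasDerivAt_integral_of_dominated_loc_of_deriv_le
      (F := fun (z : ℂ) ω => (f ω : ℂ) ^ z)
      (F' := fun (z : ℂ) ω => Complex.log (f ω) * (f ω : ℂ) ^ z)
      (bound := fun ω => C * (f ω ^ ε + f ω ^ (-ε))) (Metric.ball_mem_nhds _ hr0)
      (Filter.Eventually.of_forall fun z => hmeasC z) (hintC z₀ hz₀)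
      (hmeasC' z₀) ?_ (hint.const_mul C) ?_
    · exact h.2
    · filter_upwards [hf0] with ω hω
      intro z hz
      have hzabs : |z.re| ≤ |z₀.re| + r := by
        have h1 := Metric.mem_ball.1 hz
        rw [Complex.dist_eq] at h1
        have h2 : |z.re - z₀.re| ≤ ‖z - z₀‖ := by
          simpa using Complex.abs_re_le_norm (z - z₀)
        have h3 : |z.re| ≤ |z₀.re| + |z.re - z₀.re| := by
          calc |z.re| = |z₀.re + (z.re - z₀.re)| := by ring_nf
            _ ≤ |z₀.re| + |z.re - z₀.re| := abs_add_le _ _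
        linarith
      have hlog : Complex.log (f ω) = (Real.log (f ω) : ℂ) :=
        (Complex.ofReal_log hω.le).symm
      calc ‖Complex.log (f ω) * (f ω : ℂ) ^ z‖
          = |Real.log (f ω)| * f ω ^ z.re := by
            rw [norm_mul, hlog, Complex.norm_real, Real.norm_eq_abs,
              Complex.norm_cpow_eq_rpow_re_of_pos hω]
        _ = |Real.log (f ω)| ^ 1 * f ω ^ z.re := by rw [pow_one]
        _ ≤ C * (f ω ^ ε + f ω ^ (-ε)) := hC (f ω) hω z.re hzabs
    · filter_upwards [hf0] with ω hω
      intro z hz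
      have h1 : HasDerivAt (fun y : ℂ => (f ω : ℂ) ^ y)
          ((f ω : ℂ) ^ z * Complex.log (f ω)) z :=
        (Complex.hasStrictDerivAt_const_cpow (Or.inl (by exact_mod_cast hω.ne'))).hasDerivAt
      refine h1.congr_deriv ?_
      ring
  -- Mc is analytic on the strip
  set S : Set ℂ := Complex.re ⁻¹' Set.Ioo (-ε) ε with hSdef
  have hSopen : IsOpen S := isOpen_Ioo.preimage Complex.continuous_re
  have hMcdiff : DifferentiableOn ℂ Mc S := by
    intro z hz
    have hz' : |z.re| < ε := abs_lt.2 ⟨(hz : z.re ∈ Set.Ioo (-ε) ε).1, hz.2⟩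
    exact (hderivC z hz').differentiableAt.differentiableWithinAt
  have hMcan : AnalyticOnNhd ℂ Mc S := hMcdiff.analyticOnNhd hSopen
  -- relate M to Mc
  have hMM : ∀ k : ℝ, Mc k = ((∫ ω, f ω ^ k ∂μ : ℝ) : ℂ) := by
    intro k
    simp only [hMcdef]
    have : ∫ ω, (f ω : ℂ) ^ (k : ℂ) ∂μ = ∫ ω, ((f ω ^ k : ℝ) : ℂ) ∂μ := by
      apply integral_congr_ae
      filter_upwards [hf0] with ω hω
      rw [Complex.ofReal_cpow hω.le]
    rw [this]; exact integral_ofReal (𝕜 := ℂ)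
  have hMeq : (fun k : ℝ => ∫ ω, f ω ^ k ∂μ) = fun k : ℝ => (Mc (k : ℂ)).re := by
    funext k
    rw [hMM k, Complex.ofReal_re]
  -- real analyticity of M
  have hMan : AnalyticOnNhd ℝ (fun k : ℝ => ∫ ω, f ω ^ k ∂μ) (Set.Ioo (-ε) ε) := by
    rw [hMeq]
    have h1 : AnalyticOnNhd ℝ Mc S := hMcan.restrictScalars
    have h2 : AnalyticOnNhd ℝ (fun k : ℝ => Mc (k : ℂ)) (Set.Ioo (-ε) ε) := by
      refine h1.comp (Complex.ofRealCLM.analyticOnNhd _) ?_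
      intro k hk
      simpa [hSdef] using hk
    exact (Complex.reCLM.analyticOnNhd (Set.univ : Set ℂ)).comp h2 (Set.mapsTo_univ _ _)
  refine ⟨hMan.contDiffOn_of_completeSpace, fun n k hk => hiter n hk, fun n => ?_⟩
  have h0 : (0 : ℝ) ∈ Set.Ioo (-ε) ε := ⟨by linarith, hε⟩
  rw [hiter n h0, hGdef]
  simp [Real.rpow_zero]
end

section
/- Let μ be a probability measure on a measurable space Ω and let f : Ω → ℝ be measurable with f(ω) > 0 μ-almost everywhere, such that for some ε > 0, ∫ (f^ε + f^{−ε}) dμ < ∞, and set γ̄ = ∫ f dμ, assumed to satisfy γ̄ > 0. Define the amount-of-fading function AF(k) = (∫ f^k dμ)/γ̄^k − 1 for k ∈ (−ε, ε), and for each natural number j let μ_j be the j-th iterated derivative of AF at k = 0. Then for every natural number n, ∫ (log f(ω))^n dμ(ω) = (log γ̄)^n + Σ_{k=0}^{n} C(n,k) · μ_k · (log γ̄)^{n−k}, where C(n,k) is the binomial coefficient. -/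
open MeasureTheory ProbabilityTheory Real

/-! With `X = log f - log γ̄` one has `f^k / γ̄^k = exp (k X)`, so `AF = M_X - 1` where `M_X` is the
moment generating function of `X`. Integrability of `f^ε` and `f^(-ε)` puts `0` in the interior of
the domain of `M_X`, hence `μ_k = E[X^k]` for `k ≥ 1` while `μ_0 = 0`, and the identity is the
binomial expansion of `E[(X + log γ̄)^n]`. -/

section

variable {Ω : Type*} [MeasurableSpace Ω] {μ : Measure Ω}

lemma zero_mem_interior_integrableExpSet {X : Ω → ℝ} {ε : ℝ} (hε : 0 < ε)
    (hpos : Integrable (fun ω => exp (ε * X ω)) μ)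
    (hneg : Integrable (fun ω => exp (-ε * X ω)) μ) :
    (0 : ℝ) ∈ interior (integrableExpSet X μ) := by
  have hIoo : Set.Ioo (-ε) ε ⊆ interior (integrableExpSet X μ) := by
    rw [isOpen_Ioo.subset_interior_iff]
    exact fun t ht => integrable_exp_mul_of_le_of_le hneg hpos ht.1.le ht.2.le
  exact hIoo ⟨neg_neg_of_pos hε, hε⟩

lemma iteratedDeriv_mgf_sub_one_zero_succ {X : Ω → ℝ}
    (h : (0 : ℝ) ∈ interior (integrableExpSet X μ)) (n : ℕ) :
    iteratedDeriv (n + 1) (fun t => mgf X μ t - 1) 0 = μ[X ^ (n + 1)] := by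
  rw [iteratedDeriv_succ', deriv_sub_const_fun, ← iteratedDeriv_succ',
    iteratedDeriv_mgf_zero h]

lemma integral_add_const_pow {X : Ω → ℝ} (c : ℝ) (n : ℕ)
    (hX : ∀ k ≤ n, Integrable (fun ω => X ω ^ k) μ) :
    ∫ ω, (X ω + c) ^ n ∂μ
      = ∑ k ∈ Finset.range (n + 1), (n.choose k : ℝ) * (∫ ω, X ω ^ k ∂μ) * c ^ (n - k) := by
  calc ∫ ω, (X ω + c) ^ n ∂μ
      = ∫ ω, ∑ k ∈ Finset.range (n + 1), X ω ^ k * (c ^ (n - k) * n.choose k) ∂μ := by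
        simp_rw [add_pow, mul_assoc]
    _ = ∑ k ∈ Finset.range (n + 1), ∫ ω, X ω ^ k * (c ^ (n - k) * n.choose k) ∂μ :=
        integral_finsetSum _ fun k hk =>
          (hX k (Nat.lt_succ_iff.mp (Finset.mem_range.mp hk))).mul_const _
    _ = _ := Finset.sum_congr rfl fun k _ => by rw [integral_mul_const]; ring

lemma rpow_div_rpow_eq_exp_mul_log_sub {x y : ℝ} (hx : 0 < x) (hy : 0 < y) (t : ℝ) :
    x ^ t / y ^ t = exp (t * (log x - log y)) := by
  rw [rpow_def_of_pos hx, rpow_def_of_pos hy, ← exp_sub]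
  ring_nf

lemma integral_rpow_div_rpow_eq_mgf {f : Ω → ℝ} (hf0 : ∀ᵐ ω ∂μ, 0 < f ω) {y : ℝ} (hy : 0 < y)
    (t : ℝ) : (∫ ω, f ω ^ t ∂μ) / y ^ t = mgf (fun ω => log (f ω) - log y) μ t := by
  rw [mgf, ← integral_div]
  refine integral_congr_ae ?_
  filter_upwards [hf0] with ω hω using rpow_div_rpow_eq_exp_mul_log_sub hω hy t

lemma integrable_exp_mul_log_sub {f : Ω → ℝ} (hf0 : ∀ᵐ ω ∂μ, 0 < f ω) {y : ℝ} (hy : 0 < y)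
    {t : ℝ} (h : Integrable (fun ω => f ω ^ t) μ) :
    Integrable (fun ω => exp (t * (log (f ω) - log y))) μ :=
  (h.div_const (y ^ t)).congr <| by
    filter_upwards [hf0] with ω hω using rpow_div_rpow_eq_exp_mul_log_sub hω hy t

lemma zero_mem_interior_integrableExpSet_log_sub {f : Ω → ℝ} (hf : Measurable f)
    (hf0 : ∀ᵐ ω ∂μ, 0 < f ω) {ε : ℝ} (hε : 0 < ε)
    (hint : Integrable (fun ω => f ω ^ ε + f ω ^ (-ε)) μ) {y : ℝ} (hy : 0 < y) :
    (0 : ℝ) ∈ interior (integrableExpSet (fun ω => log (f ω) - log y) μ) := by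
  have hnonneg (t : ℝ) : 0 ≤ᵐ[μ] fun ω => f ω ^ t := by
    filter_upwards [hf0] with ω hω using rpow_nonneg hω.le t
  obtain ⟨hpos, hneg⟩ := (integrable_add_iff_of_nonneg (hf.pow_const ε).aestronglyMeasurable
    (hnonneg ε) (hnonneg (-ε))).mp hint
  exact zero_mem_interior_integrableExpSet hε (integrable_exp_mul_log_sub hf0 hy hpos)
    (integrable_exp_mul_log_sub hf0 hy hneg)

end

theorem hocc_high_snr_amount_of_fading_expansion_general {Ω : Type*} [MeasurableSpace Ω]
    (μ : Measure Ω) [IsProbabilityMeasure μ] (f : Ω → ℝ) (hf : Measurable f)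
    (hf0 : ∀ᵐ ω ∂μ, 0 < f ω) (ε : ℝ) (hε : 0 < ε)
    (hint : Integrable (fun ω => f ω ^ ε + f ω ^ (-ε)) μ)
    (γbar : ℝ) (hγbarpos : 0 < γbar)
    (AF : ℝ → ℝ) (hAF : ∀ k : ℝ, AF k = (∫ ω, f ω ^ k ∂μ) / γbar ^ k - 1)
    (μcoef : ℕ → ℝ) (hμcoef : ∀ j : ℕ, μcoef j = iteratedDeriv j AF 0) :
    ∀ n : ℕ, ∫ ω, (Real.log (f ω)) ^ n ∂μ
      = (Real.log γbar) ^ n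
        + ∑ k ∈ Finset.range (n + 1),
            (n.choose k : ℝ) * μcoef k * (Real.log γbar) ^ (n - k) := by
  intro n
  set X : Ω → ℝ := fun ω => log (f ω) - log γbar
  have h0 : (0 : ℝ) ∈ interior (integrableExpSet X μ) :=
    zero_mem_interior_integrableExpSet_log_sub hf hf0 hε hint hγbarpos
  have hAF_mgf : AF = fun t => mgf X μ t - 1 :=
    funext fun t => by rw [hAF, integral_rpow_div_rpow_eq_mgf hf0 hγbarpos]
  have hμcoef_zero : μcoef 0 = 0 := by simp [hμcoef, hAF_mgf]
  have hμcoef_succ (k : ℕ) : μcoef (k + 1) = ∫ ω, X ω ^ (k + 1) ∂μ := by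
    rw [hμcoef, hAF_mgf, iteratedDeriv_mgf_sub_one_zero_succ h0]
    rfl
  have hlog : ∫ ω, log (f ω) ^ n ∂μ = ∫ ω, (X ω + log γbar) ^ n ∂μ := by simp [X]
  rw [hlog, integral_add_const_pow _ n fun k _ =>
      integrable_pow_of_mem_interior_integrableExpSet h0 k,
    Finset.sum_range_succ', Finset.sum_range_succ']
  simp [hμcoef_zero, hμcoef_succ]
  ring

/-- Exact identity underlying the paper's Theorem 2: with `γ̄ = ∫ f dμ > 0` and
amount-of-fading function `AF(k) = (∫ f^k dμ)/γ̄^k - 1`, letting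
`μ_j = (d/dk)^j AF |_{k=0}`, one has for all `n`
`∫ (log f)^n dμ = (log γ̄)^n + ∑_{k=0}^n C(n,k) μ_k (log γ̄)^(n-k)`. -/
theorem hocc_high_snr_amount_of_fading_expansion {Ω : Type*} [MeasurableSpace Ω]
    (μ : Measure Ω) [IsProbabilityMeasure μ] (f : Ω → ℝ) (hf : Measurable f)
    (hf0 : ∀ᵐ ω ∂μ, 0 < f ω) (ε : ℝ) (hε : 0 < ε)
    (hint : Integrable (fun ω => f ω ^ ε + f ω ^ (-ε)) μ)
    (γbar : ℝ) (hγbar : γbar = ∫ ω, f ω ∂μ) (hγbarpos : 0 < γbar)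
    (AF : ℝ → ℝ) (hAF : ∀ k : ℝ, AF k = (∫ ω, f ω ^ k ∂μ) / γbar ^ k - 1)
    (μcoef : ℕ → ℝ) (hμcoef : ∀ j : ℕ, μcoef j = iteratedDeriv j AF 0) :
    ∀ n : ℕ, ∫ ω, (Real.log (f ω)) ^ n ∂μ
      = (Real.log γbar) ^ n
        + ∑ k ∈ Finset.range (n + 1),
            (n.choose k : ℝ) * μcoef k * (Real.log γbar) ^ (n - k) :=
  hocc_high_snr_amount_of_fading_expansion_general μ f hf hf0 ε hε hint γbar hγbarpos AF hAF μcoef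
    hμcoef
end

section
/- Let μ be a probability measure on a measurable space Ω and let f : Ω → ℝ be measurable with f(ω) > 0 μ-almost everywhere, such that for some ε > 0, ∫ (f^ε + f^{−ε}) dμ < ∞, and set γ̄ = ∫ f dμ, assumed to satisfy γ̄ > 0. Define AF(k) = (∫ f^k dμ)/γ̄^k − 1 for k ∈ (−ε, ε). Then ∫ log f(ω) dμ(ω) = log γ̄ + AF′(0), where AF′(0) is the derivative of AF at k = 0. -/
/-!
Differentiating `k ↦ ∫ f^k dμ` under the integral sign at `k = 0` gives `∫ log f dμ`; the
exchange is justified because `|f^k log f|` is dominated by a multiple of `f^ε + f^{-ε}` for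
`|k| ≤ ε / 2`. Since `∫ f^0 dμ = 1` and `γ̄^0 = 1`, the quotient rule gives
`AF′(0) = ∫ log f dμ - log γ̄`.
-/

open MeasureTheory

namespace Real

theorem rpow_le_rpow_add_rpow_neg {x ε a : ℝ} (hx : 0 < x) (ha : |a| ≤ ε) :
    x ^ a ≤ x ^ ε + x ^ (-ε) := by
  obtain ⟨ha₁, ha₂⟩ := abs_le.mp ha
  have hpos := rpow_pos_of_pos hx ε
  have hneg := rpow_pos_of_pos hx (-ε)
  rcases le_or_gt 1 x with h | h
  · linarith [rpow_le_rpow_of_exponent_le h ha₂]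
  · linarith [rpow_le_rpow_of_exponent_ge hx h.le ha₁]

theorem abs_log_le_rpow_add_rpow_neg {x δ : ℝ} (hx : 0 < x) (hδ : 0 < δ) :
    |log x| ≤ (x ^ δ + x ^ (-δ)) / δ := by
  have hupper : log x ≤ x ^ δ / δ := log_le_rpow_div hx.le hδ
  have hlower : -log x ≤ x ^ (-δ) / δ := by
    rw [← log_inv, rpow_neg hx.le, ← inv_rpow hx.le]
    exact log_le_rpow_div (inv_nonneg.mpr hx.le) hδ
  have hpos := rpow_pos_of_pos hx δ
  have hneg := rpow_pos_of_pos hx (-δ)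
  rw [add_div, abs_le]
  constructor <;> linarith [div_pos hpos hδ, div_pos hneg hδ]

theorem abs_rpow_mul_log_le {x ε k : ℝ} (hx : 0 < x) (hε : 0 < ε) (hk : |k| ≤ ε / 2) :
    |x ^ k * log x| ≤ 4 / ε * (x ^ ε + x ^ (-ε)) := by
  obtain ⟨hk₁, hk₂⟩ := abs_le.mp hk
  have hplus : x ^ (k + ε / 2) ≤ x ^ ε + x ^ (-ε) :=
    rpow_le_rpow_add_rpow_neg hx (abs_le.mpr ⟨by linarith, by linarith⟩)
  have hminus : x ^ (k + -(ε / 2)) ≤ x ^ ε + x ^ (-ε) :=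
    rpow_le_rpow_add_rpow_neg hx (abs_le.mpr ⟨by linarith, by linarith⟩)
  calc |x ^ k * log x| = x ^ k * |log x| := by
        rw [abs_mul, abs_of_pos (rpow_pos_of_pos hx k)]
    _ ≤ x ^ k * ((x ^ (ε / 2) + x ^ (-(ε / 2))) / (ε / 2)) :=
        mul_le_mul_of_nonneg_left (abs_log_le_rpow_add_rpow_neg hx (by positivity))
          (rpow_pos_of_pos hx k).le
    _ = 2 / ε * (x ^ (k + ε / 2) + x ^ (k + -(ε / 2))) := by
        rw [rpow_add hx, rpow_add hx]
        field_simp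
    _ ≤ 2 / ε * ((x ^ ε + x ^ (-ε)) + (x ^ ε + x ^ (-ε))) := by gcongr
    _ = 4 / ε * (x ^ ε + x ^ (-ε)) := by ring

end Real

theorem hasDerivAt_integral_rpow_zero {Ω : Type*} [MeasurableSpace Ω] {μ : Measure Ω}
    [IsFiniteMeasure μ] {f : Ω → ℝ} (hf : AEMeasurable f μ) (hf0 : ∀ᵐ ω ∂μ, 0 < f ω)
    {ε : ℝ} (hε : 0 < ε) (hint : Integrable (fun ω => f ω ^ ε + f ω ^ (-ε)) μ) :
    HasDerivAt (fun k : ℝ => ∫ ω, f ω ^ k ∂μ) (∫ ω, Real.log (f ω) ∂μ) 0 := by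
  have hderiv := hasDerivAt_integral_of_dominated_loc_of_deriv_le
    (F := fun (k : ℝ) ω => f ω ^ k) (F' := fun (k : ℝ) ω => f ω ^ k * Real.log (f ω))
    (bound := fun ω => 4 / ε * (f ω ^ ε + f ω ^ (-ε)))
    (Metric.closedBall_mem_nhds 0 (half_pos hε))
    (.of_forall fun k => (hf.pow_const k).aestronglyMeasurable)
    (by simpa only [Real.rpow_zero] using integrable_const (1 : ℝ))
    ((hf.pow_const 0).mul hf.log).aestronglyMeasurable
    (by
      filter_upwards [hf0] with ω hω k hk
      rw [Metric.mem_closedBall, Real.dist_eq, sub_zero] at hk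
      exact Real.abs_rpow_mul_log_le hω hε hk)
    (hint.const_mul _)
    (by
      filter_upwards [hf0] with ω hω k _
      exact (Real.hasStrictDerivAt_const_rpow hω k).hasDerivAt)
  simpa only [Real.rpow_zero, one_mul] using hderiv.2

theorem acc_high_snr_amount_of_fading_general {Ω : Type*} [MeasurableSpace Ω]
    (μ : Measure Ω) [IsProbabilityMeasure μ] (f : Ω → ℝ) (hf : Measurable f)
    (hf0 : ∀ᵐ ω ∂μ, 0 < f ω) (ε : ℝ) (hε : 0 < ε)
    (hint : Integrable (fun ω => f ω ^ ε + f ω ^ (-ε)) μ)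
    (γbar : ℝ) (hγbarpos : 0 < γbar)
    (AF : ℝ → ℝ) (hAF : ∀ k : ℝ, AF k = (∫ ω, f ω ^ k ∂μ) / γbar ^ k - 1) :
    ∫ ω, Real.log (f ω) ∂μ = Real.log γbar + deriv AF 0 := by
  have hmoment := hasDerivAt_integral_rpow_zero hf.aemeasurable hf0 hε hint
  have hpow := (Real.hasStrictDerivAt_const_rpow hγbarpos 0).hasDerivAt
  have hAF' : HasDerivAt AF (∫ ω, Real.log (f ω) ∂μ - Real.log γbar) 0 := by
    rw [funext hAF]
    refine ((hmoment.div hpow (by simp)).sub_const 1).congr_deriv ?_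
    simp
  rw [hAF'.deriv]
  ring

/-- Exact identity underlying the paper's Theorem 3: with `γ̄ = ∫ f dμ > 0` and
amount-of-fading function `AF(k) = (∫ f^k dμ)/γ̄^k - 1`, one has
`∫ log f dμ = log γ̄ + AF′(0)`. -/
theorem acc_high_snr_amount_of_fading {Ω : Type*} [MeasurableSpace Ω]
    (μ : Measure Ω) [IsProbabilityMeasure μ] (f : Ω → ℝ) (hf : Measurable f)
    (hf0 : ∀ᵐ ω ∂μ, 0 < f ω) (ε : ℝ) (hε : 0 < ε)
    (hint : Integrable (fun ω => f ω ^ ε + f ω ^ (-ε)) μ)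
    (γbar : ℝ) (hγbar : γbar = ∫ ω, f ω ∂μ) (hγbarpos : 0 < γbar)
    (AF : ℝ → ℝ) (hAF : ∀ k : ℝ, AF k = (∫ ω, f ω ^ k ∂μ) / γbar ^ k - 1) :
    ∫ ω, Real.log (f ω) ∂μ = Real.log γbar + deriv AF 0 :=
  acc_high_snr_amount_of_fading_general μ f hf hf0 ε hε hint γbar hγbarpos AF hAF
end

section
/- Let a, b, t be real numbers and let n be a natural number. Then the n-th iterated derivative at t of the function k ↦ exp(a + b·k²) equals exp(a + b·t²) · Σ_{j=0}^{⌊n/2⌋} ( n! / (j! · (n − 2j)!) ) · (2·b·t)^{n−2j} · b^j. -/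
/-!
The function `F k = exp (a + b k²)` solves `F' = 2 b k F`, and differentiating this `n + 1` times
gives the three-term recurrence `F⁽ⁿ⁺²⁾ = 2 b t F⁽ⁿ⁺¹⁾ + 2 b (n + 1) F⁽ⁿ⁾`. The sum in the
statement is the heat polynomial `vₙ(x, y)` at `x = 2 b t`, `y = b`, and heat polynomials satisfy
`vₙ₊₂ = x vₙ₊₁ + 2 (n + 1) y vₙ`, so both sides agree by induction from `n = 0, 1`.
-/

open Finset Nat
open scoped ContDiff

section HeatPolynomial

variable {K : Type*} [Field K]

/-- The Rosenbloom–Widder heat polynomial `vₙ(x, y)`. -/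
def heatPolynomial (n : ℕ) (x y : K) : K :=
  ∑ j ∈ range (n / 2 + 1),
    ((n.factorial : K) / ((j.factorial : K) * ((n - 2 * j).factorial : K))) * x ^ (n - 2 * j) * y ^ j

@[simp]
theorem heatPolynomial_zero (x y : K) : heatPolynomial 0 x y = 1 := by
  simp [heatPolynomial]

@[simp]
theorem heatPolynomial_one (x y : K) : heatPolynomial 1 x y = x := by
  simp [heatPolynomial]

theorem Nat.add_two_descFactorial_two_mul_add_two (n j : ℕ) :
    (n + 2).descFactorial (2 * j + 2)
      = (n + 1).descFactorial (2 * j + 2) + 2 * (j + 1) * (n + 1) * n.descFactorial (2 * j) := by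
  rw [succ_descFactorial_succ, succ_descFactorial_succ, succ_descFactorial_succ,
    descFactorial_succ]
  rcases le_or_gt (2 * j) n with hj | hj
  · obtain ⟨s, rfl⟩ := Nat.exists_eq_add_of_le hj
    rw [Nat.add_sub_cancel_left]
    ring
  · simp [descFactorial_eq_zero_iff_lt.mpr hj]

theorem Nat.descFactorial_mul_pow_sub_mul_self (n k : ℕ) (x : K) :
    (n.descFactorial k : K) * x ^ (n - k) * x = n.descFactorial k * x ^ (n + 1 - k) := by
  rcases le_or_gt k n with hk | hk
  · rw [Nat.sub_add_comm hk, pow_succ, mul_assoc]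
  · simp [descFactorial_eq_zero_iff_lt.mpr hk]

variable [CharZero K]

/-- Unlike `n! / (j! (n - 2j)!)` with truncated subtraction, the coefficient
`n.descFactorial (2j) / j!` vanishes for `2j > n`, so the sum may run over any longer range. -/
theorem heatPolynomial_eq_sum_range {n N : ℕ} (hN : n / 2 < N) (x y : K) :
    heatPolynomial n x y
      = ∑ j ∈ range N, (n.descFactorial (2 * j) / j ! : K) * x ^ (n - 2 * j) * y ^ j := by
  refine sum_subset_zero_on_sdiff (by simpa using hN) (fun j hj => ?_) (fun j hj => ?_)
  · have : n < 2 * j := by simp only [mem_sdiff, mem_range] at hj; omega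
    simp [descFactorial_eq_zero_iff_lt.mpr this]
  · have hj : 2 * j ≤ n := by simp only [mem_range] at hj; omega
    have : ((n - 2 * j)! : K) ≠ 0 := Nat.cast_ne_zero.mpr (factorial_ne_zero _)
    rw [← factorial_mul_descFactorial hj]
    push_cast
    field_simp

theorem heatPolynomial_add_two (n : ℕ) (x y : K) :
    heatPolynomial (n + 2) x y
      = x * heatPolynomial (n + 1) x y + 2 * (n + 1) * y * heatPolynomial n x y := by
  have hterm (j : ℕ) :
      ((n + 2).descFactorial (2 * (j + 1)) / (j + 1)! : K) * x ^ (n + 2 - 2 * (j + 1)) * y ^ (j + 1)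
        = x * (((n + 1).descFactorial (2 * (j + 1)) / (j + 1)! : K)
            * x ^ (n + 1 - 2 * (j + 1)) * y ^ (j + 1))
          + 2 * (n + 1) * y * ((n.descFactorial (2 * j) / j ! : K) * x ^ (n - 2 * j) * y ^ j) := by
    have hd : ((n + 2).descFactorial (2 * (j + 1)) : K)
        = (n + 1).descFactorial (2 * (j + 1)) + 2 * (j + 1) * (n + 1) * n.descFactorial (2 * j) := by
      exact_mod_cast Nat.add_two_descFactorial_two_mul_add_two n j
    have hx := Nat.descFactorial_mul_pow_sub_mul_self (n + 1) (2 * (j + 1)) x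
    rw [show n + 1 + 1 - 2 * (j + 1) = n - 2 * j by omega] at hx
    rw [show n + 2 - 2 * (j + 1) = n - 2 * j by omega, hd, Nat.factorial_succ]
    push_cast
    field_simp
    linear_combination (-y ^ (j + 1) / j !) * hx
  rw [heatPolynomial_eq_sum_range (N := n + 2 + 1) (by omega),
    heatPolynomial_eq_sum_range (N := n + 2 + 1) (by omega),
    heatPolynomial_eq_sum_range (N := n + 2) (by omega), sum_range_succ', sum_range_succ' _ (n + 2),
    mul_add, mul_sum, mul_sum]
  simp only [hterm, sum_add_distrib]
  simp
  ring

end HeatPolynomial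

section IteratedDeriv

variable {𝕜 : Type*} [NontriviallyNormedField 𝕜] {f : 𝕜 → 𝕜}

theorem iteratedDeriv_add_two_of_deriv_eq {c : 𝕜} (hf : ContDiff 𝕜 ∞ f)
    (hf' : deriv f = fun t => c * t * f t) (n : ℕ) (t : 𝕜) :
    iteratedDeriv (n + 2) f t
      = c * t * iteratedDeriv (n + 1) f t + c * (n + 1) * iteratedDeriv n f t := by
  have hD (k : ℕ) (s : 𝕜) : HasDerivAt (iteratedDeriv k f) (iteratedDeriv (k + 1) f s) s := by
    rw [iteratedDeriv_succ]
    exact (hf.differentiable_iteratedDeriv k (mod_cast WithTop.coe_lt_top _) s).hasDerivAt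
  have hlin (s : 𝕜) : HasDerivAt (fun s => c * s) c s := by
    simpa using (hasDerivAt_id s).const_mul c
  induction n generalizing t with
  | zero =>
    have h := (hlin t).fun_mul (hD 0 t)
    rw [iteratedDeriv_zero, ← hf'] at h
    rw [iteratedDeriv_succ, iteratedDeriv_one, h.deriv]
    simp
    ring
  | succ n ih =>
    have h := ((hlin t).fun_mul (hD (n + 1) t)).fun_add ((hD n t).const_mul (c * (n + 1)))
    rw [← funext ih] at h
    rw [iteratedDeriv_succ, h.deriv]
    push_cast
    ring

theorem iteratedDeriv_eq_mul_heatPolynomial [CharZero 𝕜] {b : 𝕜} (hf : ContDiff 𝕜 ∞ f)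
    (hf' : deriv f = fun t => 2 * b * t * f t) (t : 𝕜) :
    ∀ n : ℕ, iteratedDeriv n f t = f t * heatPolynomial n (2 * b * t) b
  | 0 => by simp
  | 1 => by simp [hf', mul_comm]
  | n + 2 => by
    rw [iteratedDeriv_add_two_of_deriv_eq hf hf', iteratedDeriv_eq_mul_heatPolynomial hf hf' t n,
      iteratedDeriv_eq_mul_heatPolynomial hf hf' t (n + 1), heatPolynomial_add_two]
    ring

end IteratedDeriv

/-- Closed form of the higher-order differentiation of the Gaussian-type
function (paper's `Φ_(n)(a,b,k) = (∂/∂k)^n exp(a + b k²)`, cf. Theorem 5):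
`(∂/∂t)^n exp(a + b t²)
  = exp(a + b t²) ∑_{j=0}^{⌊n/2⌋} (n!/(j!(n-2j)!)) (2bt)^(n-2j) b^j`. -/
theorem iteratedDeriv_exp_quadratic (a b t : ℝ) (n : ℕ) :
    iteratedDeriv n (fun k : ℝ => Real.exp (a + b * k ^ 2)) t
      = Real.exp (a + b * t ^ 2)
        * ∑ j ∈ Finset.range (n / 2 + 1),
            ((n.factorial : ℝ) / ((j.factorial : ℝ) * ((n - 2 * j).factorial : ℝ)))
              * (2 * b * t) ^ (n - 2 * j) * b ^ j := by
  refine iteratedDeriv_eq_mul_heatPolynomial (by fun_prop) ?_ t n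
  ext k
  rw [(((hasDerivAt_pow 2 k).const_mul b).const_add a).exp.deriv]
  push_cast
  ring
end

section
/- There exists a unique γ̄ > 0 such that ∫_0^8 exp(−γ/(2γ̄)) / √(2π·γ̄·γ) dγ = 1/2. Moreover, the function γ̄ ↦ ∫_0^8 exp(−γ/(2γ̄))/√(2πγ̄γ) dγ is strictly decreasing on (0, ∞). -/
/-!
The substitution `γ = 2 γ̄ x²` removes the `1/√γ` singularity and turns the one-sided Gaussian
density into `(2/√π) e^{-x²}`, so the CDF at a threshold `T` equals `erf √(T / (2 γ̄))`.
Since `erf` is continuous and strictly increasing from `0` to `1`, the CDF is strictly decreasing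
in `γ̄` and takes every level `p ∈ (0,1)` exactly once, at `γ̄ = T / (2 (erf⁻¹ p)²)`.
-/

open Real MeasureTheory Set Filter Topology

noncomputable def erf (x : ℝ) : ℝ := 2 / √π * ∫ t in (0:ℝ)..x, exp (-t ^ 2)

lemma hasDerivAt_erf (x : ℝ) : HasDerivAt erf (2 / √π * exp (-x ^ 2)) x :=
  ((Continuous.integral_hasStrictDerivAt (by fun_prop) 0 x).hasDerivAt).const_mul _

lemma erf_zero : erf 0 = 0 := by simp [erf]

lemma continuous_erf : Continuous erf :=
  continuous_iff_continuousAt.2 fun x => (hasDerivAt_erf x).continuousAt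

lemma strictMono_erf : StrictMono erf :=
  strictMono_of_hasDerivAt_pos hasDerivAt_erf fun _ => by positivity

lemma tendsto_erf_atTop : Tendsto erf atTop (𝓝 1) := by
  have hgauss : ∫ t in Ioi (0:ℝ), exp (-t ^ 2) = √π / 2 := by
    simpa using integral_gaussian_Ioi 1
  have hint : IntegrableOn (fun t : ℝ => exp (-t ^ 2)) (Ioi 0) := by
    simpa using (integrable_exp_neg_mul_sq one_pos).integrableOn (s := Ioi (0:ℝ))
  have h := (intervalIntegral_tendsto_integral_Ioi 0 hint tendsto_id).const_mul (2 / √π)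
  have hone : 2 / √π * (√π / 2) = 1 := by field_simp
  rwa [hgauss, hone] at h

lemma exists_pos_erf_eq {p : ℝ} (hp0 : 0 < p) (hp1 : p < 1) : ∃ c, 0 < c ∧ erf c = p := by
  obtain ⟨M, hM⟩ := (tendsto_erf_atTop.eventually (eventually_gt_nhds hp1)).exists
  have hM0 : 0 ≤ M := strictMono_erf.le_iff_le.1 (by rw [erf_zero]; linarith)
  obtain ⟨c, hc, rfl⟩ := intermediate_value_Ioo hM0 continuous_erf.continuousOn
    (show p ∈ Ioo (erf 0) (erf M) by rw [erf_zero]; exact ⟨hp0, hM⟩)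
  exact ⟨c, hc.1, rfl⟩

lemma oneSidedGaussian_comp_mul_deriv {γbar x : ℝ} (hγbar : 0 < γbar) (hx : 0 < x) :
    exp (-(2 * γbar * x ^ 2) / (2 * γbar)) / √(2 * π * γbar * (2 * γbar * x ^ 2)) *
      (4 * γbar * x) = 2 / √π * exp (-x ^ 2) := by
  have hsqrt : √(2 * π * γbar * (2 * γbar * x ^ 2)) = 2 * γbar * x * √π := by
    rw [show 2 * π * γbar * (2 * γbar * x ^ 2) = (2 * γbar * x) ^ 2 * π by ring,
      sqrt_mul (sq_nonneg _), sqrt_sq (by positivity)]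
  have hπ : 0 < √π := sqrt_pos.2 pi_pos
  rw [hsqrt, show -(2 * γbar * x ^ 2) / (2 * γbar) = -x ^ 2 by field_simp]
  field_simp
  ring

lemma integral_oneSidedGaussian_eq_erf {γbar T : ℝ} (hγbar : 0 < γbar) (hT : 0 ≤ T) :
    ∫ γ in (0:ℝ)..T, exp (-γ / (2 * γbar)) / √(2 * π * γbar * γ) =
      erf √(T / (2 * γbar)) := by
  set b := √(T / (2 * γbar))
  have hb : 2 * γbar * b ^ 2 = T := by
    rw [sq_sqrt (by positivity)]; field_simp
  have hsub := intervalIntegral.integral_comp_mul_deriv_of_deriv_nonneg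
    (f := fun x => 2 * γbar * x ^ 2) (f' := fun x => 4 * γbar * x)
    (g := fun γ => exp (-γ / (2 * γbar)) / √(2 * π * γbar * γ)) (a := 0) (b := b)
    (by fun_prop)
    (fun x _ => ((hasDerivAt_pow 2 x).const_mul (2 * γbar)).congr_deriv (by ring))
    (fun x hx => by
      rw [min_eq_left (sqrt_nonneg _)] at hx
      exact mul_nonneg (by positivity) hx.1.le)
  simp only [Function.comp_apply, hb, zero_pow two_ne_zero, mul_zero] at hsub
  rw [← hsub, erf, ← intervalIntegral.integral_const_mul]
  refine intervalIntegral.integral_congr_ae (Eventually.of_forall fun x hx => ?_)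
  rw [uIoc_of_le (sqrt_nonneg _)] at hx
  exact oneSidedGaussian_comp_mul_deriv hγbar hx.1

lemma strictAntiOn_integral_oneSidedGaussian {T : ℝ} (hT : 0 < T) :
    StrictAntiOn (fun γbar : ℝ => ∫ γ in (0:ℝ)..T,
      exp (-γ / (2 * γbar)) / √(2 * π * γbar * γ)) (Ioi 0) := by
  intro a (ha : 0 < a) b (hb : 0 < b) hab
  simp only [integral_oneSidedGaussian_eq_erf ha hT.le, integral_oneSidedGaussian_eq_erf hb hT.le]
  refine strictMono_erf (sqrt_lt_sqrt (by positivity) ?_)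
  gcongr

lemma existsUnique_integral_oneSidedGaussian_eq {T p : ℝ} (hT : 0 < T) (hp0 : 0 < p)
    (hp1 : p < 1) :
    ∃! γbar : ℝ, 0 < γbar ∧
      ∫ γ in (0:ℝ)..T, exp (-γ / (2 * γbar)) / √(2 * π * γbar * γ) = p := by
  obtain ⟨c, hc, hcp⟩ := exists_pos_erf_eq hp0 hp1
  have hγbar : 0 < T / (2 * c ^ 2) := by positivity
  have hval : ∫ γ in (0:ℝ)..T,
      exp (-γ / (2 * (T / (2 * c ^ 2)))) / √(2 * π * (T / (2 * c ^ 2)) * γ) = p := by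
    rw [integral_oneSidedGaussian_eq_erf hγbar hT.le,
      show T / (2 * (T / (2 * c ^ 2))) = c ^ 2 by field_simp, sqrt_sq hc.le, hcp]
  refine ⟨T / (2 * c ^ 2), ⟨hγbar, hval⟩, fun γbar ⟨hpos, hγp⟩ => ?_⟩
  exact (strictAntiOn_integral_oneSidedGaussian hT).injOn hpos hγbar (hγp.trans hval.symm)

/-- Rigorous content of the paper's Theorem 1: the one-sided Gaussian CDF at
the threshold `γ_th = 8`, viewed as a function of the average SNR `γ̄`, is
strictly decreasing on `(0,∞)` and takes the value `1/2` at a unique `γ̄ > 0`. -/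
theorem boundary_snr_high_snr_regime :
    (∃! γbar : ℝ, 0 < γbar ∧
        (∫ γ in (0:ℝ)..8,
          Real.exp (-γ / (2 * γbar)) / Real.sqrt (2 * Real.pi * γbar * γ)) = 1 / 2) ∧
      StrictAntiOn
        (fun γbar : ℝ => ∫ γ in (0:ℝ)..8,
          Real.exp (-γ / (2 * γbar)) / Real.sqrt (2 * Real.pi * γbar * γ))
        (Set.Ioi 0) :=
  ⟨existsUnique_integral_oneSidedGaussian_eq (by norm_num) (by norm_num) (by norm_num),
    strictAntiOn_integral_oneSidedGaussian (by norm_num)⟩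
end

section
/- Let m > 0, ξ > 0, γ̄ > 0 be real numbers and set β = Γ(m + 1/ξ)/Γ(m). Then ∫_0^∞ (log γ) · (ξ/Γ(m)) · (β/γ̄)^{ξm} · γ^{ξm − 1} · exp(−((β/γ̄)·γ)^ξ) dγ = log(γ̄) − log(β) + (1/ξ) · Γ′(m)/Γ(m), where Γ′ is the derivative of the real Gamma function. -/
/-!
The substitution `t = (c γ) ^ ξ` with `c = β / γ̄` turns the generalized gamma density into the
Gamma density `t ^ (m - 1) e ^ (-t) / Γ(m)` and `log γ` into `ξ⁻¹ log t - log c`. The Gamma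
density has total mass one, and differentiating the Gamma integral under the integral sign gives
`∫ log t · t ^ (m - 1) e ^ (-t) dt = Γ'(m)`.
-/

open MeasureTheory Set

namespace Real

lemma abs_log_le_rpow_add_rpow_neg_div {x ε : ℝ} (hx : 0 < x) (hε : 0 < ε) :
    |log x| ≤ (x ^ ε + x ^ (-ε)) / ε := by
  have hpos : log x ≤ x ^ ε / ε := log_le_rpow_div hx.le hε
  have hneg : -log x ≤ x ^ (-ε) / ε := by
    simpa [log_inv, inv_rpow hx.le, rpow_neg hx.le] using log_le_rpow_div (inv_pos.2 hx).le hε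
  have hpos_div := div_pos (rpow_pos_of_pos hx ε) hε
  have hneg_div := div_pos (rpow_pos_of_pos hx (-ε)) hε
  rw [abs_le, add_div]
  constructor <;> linarith

lemma integrableOn_log_mul_rpow_mul_exp_neg {s : ℝ} (hs : 0 < s) :
    IntegrableOn (fun t ↦ log t * t ^ (s - 1) * exp (-t)) (Ioi 0) := by
  -- `|log t|` is dominated by `t ^ (s/2) + t ^ (-s/2)`, leaving two convergent Gamma integrals.
  have hbound := ((GammaIntegral_convergent (s := s + s / 2) (by positivity)).add
    (GammaIntegral_convergent (s := s - s / 2) (by linarith))).const_mul (s / 2)⁻¹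
  refine hbound.mono' ?_ ((ae_restrict_iff' measurableSet_Ioi).2 (.of_forall fun t ht ↦ ?_))
  · refine ContinuousOn.aestronglyMeasurable (fun t ht ↦ ?_) measurableSet_Ioi
    have ht : t ≠ 0 := ne_of_gt ht
    exact (((continuousAt_log ht).mul (continuousAt_rpow_const _ _ (Or.inl ht))).mul
      (continuous_exp.comp continuous_neg).continuousAt).continuousWithinAt
  · have ht : 0 < t := ht
    have hlog := abs_log_le_rpow_add_rpow_neg_div ht (half_pos hs)
    rw [norm_mul, norm_mul, norm_of_nonneg (rpow_pos_of_pos ht _).le,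
      norm_of_nonneg (exp_pos _).le, norm_eq_abs]
    calc |log t| * t ^ (s - 1) * exp (-t)
        ≤ (t ^ (s / 2) + t ^ (-(s / 2))) / (s / 2) * t ^ (s - 1) * exp (-t) := by gcongr
      _ = (s / 2)⁻¹ * (exp (-t) * t ^ (s + s / 2 - 1) + exp (-t) * t ^ (s - s / 2 - 1)) := by
        rw [show s + s / 2 - 1 = s / 2 + (s - 1) by ring,
          show s - s / 2 - 1 = -(s / 2) + (s - 1) by ring, rpow_add ht, rpow_add ht]
        ring

lemma hasDerivAt_Gamma_integral {s : ℝ} (hs : 0 < s) :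
    HasDerivAt Gamma (∫ t in Ioi 0, log t * t ^ (s - 1) * exp (-t)) s := by
  have hC := (Complex.hasDerivAt_GammaIntegral (s := s) (by simpa using hs)).real_of_complex
  have hofReal : ∫ t in Ioi (0 : ℝ), (t : ℂ) ^ ((s : ℂ) - 1) * (log t * exp (-t))
      = ((∫ t in Ioi 0, log t * t ^ (s - 1) * exp (-t) : ℝ) : ℂ) := by
    rw [← integral_complex_ofReal]
    refine setIntegral_congr_fun measurableSet_Ioi fun t ht ↦ ?_
    rw [← Complex.ofReal_one, ← Complex.ofReal_sub, ← Complex.ofReal_cpow (le_of_lt ht)]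
    push_cast
    ring
  rw [hofReal, Complex.ofReal_re] at hC
  refine hC.congr_of_eventuallyEq ?_
  filter_upwards [lt_mem_nhds hs] with x hx
  rw [Gamma, Complex.Gamma_eq_integral (by simpa using hx)]

lemma integral_log_mul_rpow_mul_exp_neg {s : ℝ} (hs : 0 < s) :
    ∫ t in Ioi 0, log t * t ^ (s - 1) * exp (-t) = deriv Gamma s :=
  (hasDerivAt_Gamma_integral hs).deriv.symm

lemma integral_affine_log_mul_rpow_mul_exp_neg {s : ℝ} (hs : 0 < s) (a b : ℝ) :
    ∫ t in Ioi 0, (a * log t + b) * t ^ (s - 1) * exp (-t) = a * deriv Gamma s + b * Gamma s := by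
  have hsplit : ∀ t, (a * log t + b) * t ^ (s - 1) * exp (-t)
      = a * (log t * t ^ (s - 1) * exp (-t)) + b * (exp (-t) * t ^ (s - 1)) := fun t ↦ by ring
  simp_rw [hsplit]
  rw [integral_add ((integrableOn_log_mul_rpow_mul_exp_neg hs).const_mul a)
      ((GammaIntegral_convergent hs).const_mul b), integral_const_mul, integral_const_mul,
    integral_log_mul_rpow_mul_exp_neg hs, Gamma_eq_integral hs]

end Real

open Real

lemma integral_comp_mul_rpow_Ioi {E : Type*} [NormedAddCommGroup E] [NormedSpace ℝ E]
    (g : ℝ → E) {c p : ℝ} (hc : 0 < c) (hp : 0 < p) :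
    ∫ x in Ioi 0, (p * c ^ p * x ^ (p - 1)) • g ((c * x) ^ p) = ∫ y in Ioi 0, g y := by
  have h := integral_comp_mul_left_Ioi (fun u ↦ (p * u ^ (p - 1)) • g (u ^ p)) 0 hc
  rw [mul_zero, integral_comp_rpow_Ioi_of_pos hp, eq_inv_smul_iff₀ hc.ne', ← integral_smul] at h
  rw [← h]
  refine setIntegral_congr_fun measurableSet_Ioi fun x hx ↦ ?_
  rw [smul_smul, mul_rpow (z := p - 1) hc.le (le_of_lt hx), show c ^ p = c * c ^ (p - 1) by
    rw [← rpow_one_add' hc.le (by linarith)]; ring_nf]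
  ring_nf

/-- Exact identity behind the paper's high-SNR ergodic capacity for generalized
Nakagami-m (generalized gamma) fading: with `β = Γ(m+1/ξ)/Γ(m)`,
`∫_0^∞ (log γ) p(γ) dγ = log γ̄ - log β + (1/ξ) Γ′(m)/Γ(m)`. -/
theorem generalized_gamma_log_moment (m ξ γbar : ℝ) (hm : 0 < m) (hξ : 0 < ξ)
    (hγbar : 0 < γbar) (β : ℝ) (hβ : β = Real.Gamma (m + 1 / ξ) / Real.Gamma m) :
    ∫ γ in Set.Ioi (0:ℝ),
        Real.log γ * ((ξ / Real.Gamma m) * (β / γbar) ^ (ξ * m) * γ ^ (ξ * m - 1)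
          * Real.exp (-(((β / γbar) * γ) ^ ξ)))
      = Real.log γbar - Real.log β
          + (1 / ξ) * (deriv Real.Gamma m / Real.Gamma m) := by
  have hΓ : 0 < Gamma m := Gamma_pos_of_pos hm
  have hβ₀ : 0 < β := hβ ▸ div_pos (Gamma_pos_of_pos (by positivity)) hΓ
  set c := β / γbar
  have hc : 0 < c := div_pos hβ₀ hγbar
  have hsubst : ∀ γ ∈ Ioi (0 : ℝ),
      log γ * ((ξ / Gamma m) * c ^ (ξ * m) * γ ^ (ξ * m - 1) * exp (-((c * γ) ^ ξ)))
        = (ξ * c ^ ξ * γ ^ (ξ - 1)) • ((Gamma m)⁻¹ * ((ξ⁻¹ * log ((c * γ) ^ ξ) + -log c)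
            * ((c * γ) ^ ξ) ^ (m - 1) * exp (-((c * γ) ^ ξ)))) := by
    intro γ (hγ : 0 < γ)
    rw [smul_eq_mul, log_rpow (by positivity), log_mul hc.ne' hγ.ne', ← rpow_mul (by positivity),
      mul_rpow (z := ξ * (m - 1)) hc.le hγ.le, show ξ * m = ξ + ξ * (m - 1) by ring,
      show ξ + ξ * (m - 1) - 1 = (ξ - 1) + ξ * (m - 1) by ring, rpow_add hc, rpow_add hγ]
    field_simp
    ring
  rw [setIntegral_congr_fun measurableSet_Ioi hsubst, integral_comp_mul_rpow_Ioi
      (fun t ↦ (Gamma m)⁻¹ * ((ξ⁻¹ * log t + -log c) * t ^ (m - 1) * exp (-t))) hc hξ,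
    integral_const_mul, integral_affine_log_mul_rpow_mul_exp_neg hm, log_div hβ₀.ne' hγbar.ne']
  field_simp
  ring
end

section
/- Let m > 0, ξ > 0, γ̄ > 0 be real numbers, set β = Γ(m + 1/ξ)/Γ(m), and let n ≥ 1 be a natural number. Then ∫_0^∞ (log(1 + γ))^n · (ξ/Γ(m)) · (β/γ̄)^{ξm} · γ^{ξm − 1} · exp(−((β/γ̄)·γ)^ξ) dγ ≤ (Γ(m + n/ξ)/Γ(m)) · (γ̄/β)^n. -/
/-!
Since `log (1 + γ) ≤ γ` for `γ ≥ 0`, the integral is dominated by the `n`-th moment of the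
generalized gamma law. The substitution behind `integral_rpow_mul_exp_neg_mul_rpow` turns
that moment into a Gamma integral, `Γ(m + n/ξ)/Γ(m) · (γ̄/β)^n`.
-/

open Real Set MeasureTheory

lemma Real.log_one_add_le_self {x : ℝ} (hx : 0 ≤ x) : log (1 + x) ≤ x := by
  linarith [log_le_sub_one_of_pos (by linarith : (0 : ℝ) < 1 + x)]

/-- The rate `c` is the paper's `β / γ̄`. -/
noncomputable def generalizedGammaDensity (m ξ c x : ℝ) : ℝ :=
  ξ / Gamma m * c ^ (ξ * m) * x ^ (ξ * m - 1) * exp (-(c * x) ^ ξ)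

section GeneralizedGamma

variable {m ξ c : ℝ}

lemma generalizedGammaDensity_nonneg (hm : 0 < m) (hξ : 0 ≤ ξ) (hc : 0 ≤ c) {x : ℝ}
    (hx : 0 ≤ x) : 0 ≤ generalizedGammaDensity m ξ c x := by
  have := Gamma_pos_of_pos hm
  unfold generalizedGammaDensity
  positivity

lemma rpow_mul_generalizedGammaDensity (hc : 0 < c) (s : ℝ) {x : ℝ} (hx : 0 < x) :
    x ^ s * generalizedGammaDensity m ξ c x
      = ξ / Gamma m * c ^ (ξ * m) * (x ^ (s + ξ * m - 1) * exp (-(c ^ ξ) * x ^ ξ)) := by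
  rw [generalizedGammaDensity, mul_rpow hc.le hx.le, add_sub_assoc, rpow_add hx, neg_mul]
  ring

lemma integrableOn_rpow_mul_generalizedGammaDensity (hξ : 0 < ξ) (hc : 0 < c) {s : ℝ}
    (hs : 0 < s + ξ * m) :
    IntegrableOn (fun x ↦ x ^ s * generalizedGammaDensity m ξ c x) (Ioi 0) :=
  IntegrableOn.congr_fun
    ((integrableOn_rpow_mul_exp_neg_mul_rpow (s := s + ξ * m - 1) (by linarith) hξ
      (rpow_pos_of_pos hc ξ)).const_mul _)
    (fun _ hx ↦ (rpow_mul_generalizedGammaDensity hc s hx).symm) measurableSet_Ioi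

lemma integral_rpow_mul_generalizedGammaDensity (hξ : 0 < ξ) (hc : 0 < c) {s : ℝ}
    (hs : 0 < s + ξ * m) :
    ∫ x in Ioi 0, x ^ s * generalizedGammaDensity m ξ c x
      = Gamma (m + s / ξ) / Gamma m * c ^ (-s) := by
  rw [setIntegral_congr_fun measurableSet_Ioi fun _ hx ↦ rpow_mul_generalizedGammaDensity hc s hx,
    integral_const_mul,
    integral_rpow_mul_exp_neg_mul_rpow hξ (by linarith) (rpow_pos_of_pos hc ξ), ← rpow_mul hc.le,
    sub_add_cancel]
  have hexp : ξ * (-(s + ξ * m) / ξ) = -s + -(ξ * m) := by field_simp; ring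
  have harg : (s + ξ * m) / ξ = m + s / ξ := by field_simp; ring
  have hcancel : c ^ (ξ * m) * c ^ (-(ξ * m)) = 1 := by
    rw [← rpow_add hc, add_neg_cancel, rpow_zero]
  rw [hexp, harg, rpow_add hc]
  have hξinv : ξ * (1 / ξ) = 1 := mul_one_div_cancel hξ.ne'
  linear_combination Gamma (m + s / ξ) / Gamma m * c ^ (-s)
    * (c ^ (ξ * m) * c ^ (-(ξ * m)) * hξinv + hcancel)

end GeneralizedGamma

theorem generalized_gamma_hocc_low_snr_bound_general (m ξ γbar : ℝ) (hm : 0 < m)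
    (hξ : 0 < ξ) (hγbar : 0 < γbar) (β : ℝ)
    (hβ : β = Real.Gamma (m + 1 / ξ) / Real.Gamma m) (n : ℕ) :
    ∫ γ in Set.Ioi (0:ℝ),
        (Real.log (1 + γ)) ^ n
          * ((ξ / Real.Gamma m) * (β / γbar) ^ (ξ * m) * γ ^ (ξ * m - 1)
            * Real.exp (-(((β / γbar) * γ) ^ ξ)))
      ≤ (Real.Gamma (m + (n : ℝ) / ξ) / Real.Gamma m) * (γbar / β) ^ (n : ℕ) := by
  have hβpos : 0 < β := hβ ▸ div_pos (Gamma_pos_of_pos (by positivity)) (Gamma_pos_of_pos hm)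
  have hc : 0 < β / γbar := div_pos hβpos hγbar
  have hs : 0 < (n : ℝ) + ξ * m := by positivity
  change ∫ γ in Ioi 0, log (1 + γ) ^ n * generalizedGammaDensity m ξ (β / γbar) γ ≤ _
  calc ∫ γ in Ioi 0, log (1 + γ) ^ n * generalizedGammaDensity m ξ (β / γbar) γ
      ≤ ∫ γ in Ioi 0, γ ^ (n : ℝ) * generalizedGammaDensity m ξ (β / γbar) γ := by
        refine integral_mono_of_nonneg ?_
          (integrableOn_rpow_mul_generalizedGammaDensity hξ hc hs) ?_
        all_goals
          filter_upwards [ae_restrict_mem measurableSet_Ioi] with γ (hγ : 0 < γ)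
          have hlog : 0 ≤ log (1 + γ) := log_nonneg (by linarith)
          have hdens := generalizedGammaDensity_nonneg hm hξ.le hc.le hγ.le
        · positivity
        · rw [rpow_natCast]
          exact mul_le_mul_of_nonneg_right (pow_le_pow_left₀ hlog (log_one_add_le_self hγ.le) n)
            hdens
    _ = Gamma (m + n / ξ) / Gamma m * (γbar / β) ^ n := by
        rw [integral_rpow_mul_generalizedGammaDensity hξ hc hs, rpow_neg hc.le, rpow_natCast,
          ← inv_pow, inv_div]

/-- Paper's Theorem 9 specialized to generalized Nakagami-m (generalized gamma)
fading: for `n ≥ 1`, with `β = Γ(m+1/ξ)/Γ(m)`,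
`∫_0^∞ (log(1+γ))^n p(γ) dγ ≤ (Γ(m+n/ξ)/Γ(m)) (γ̄/β)^n`. -/
theorem generalized_gamma_hocc_low_snr_bound (m ξ γbar : ℝ) (hm : 0 < m)
    (hξ : 0 < ξ) (hγbar : 0 < γbar) (β : ℝ)
    (hβ : β = Real.Gamma (m + 1 / ξ) / Real.Gamma m) (n : ℕ) (hn : 1 ≤ n) :
    ∫ γ in Set.Ioi (0:ℝ),
        (Real.log (1 + γ)) ^ n
          * ((ξ / Real.Gamma m) * (β / γbar) ^ (ξ * m) * γ ^ (ξ * m - 1)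
            * Real.exp (-(((β / γbar) * γ) ^ ξ)))
      ≤ (Real.Gamma (m + (n : ℝ) / ξ) / Real.Gamma m) * (γbar / β) ^ (n : ℕ) :=
  generalized_gamma_hocc_low_snr_bound_general m ξ γbar hm hξ hγbar β hβ n
end
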